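/- arXiv:1712.05994 — 2 statements merged into one kernel-verified Lean document; each statement's English description precedes it below -/
import Mathlib

section
/- Let D be a 2-dimensional J-invariant umbilical distribution on a Kähler manifold. If X is a section of D, then 2(∇_{JX} X)_{|D^⊥} = -g(X,X)Jξ, and consequently [X, JX]_{|D^⊥} = g(X,X)Jξ. -/
/- STATEMENT 6 (from the proof of Lemma 1).  Abstract Kähler setting as before.
`D` is a rank-2 J-invariant umbilical distribution with mean curvature vector
ξ ∈ Γ(D^⊥).  For a section X of D:
  2(∇_{JX} X)_{|D^⊥} = -g(X,X)Jξ   and   [X,JX]_{|D^⊥} = g(X,X)Jξ. -/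
theorem umbilical_complex_distribution_bracket
    {C V : Type*} [CommRing C] [Algebra ℝ C] [AddCommGroup V] [Module C V]
    (g : V → V → C) (nab : V → V → V) (lie : V → V → V) (J : V →ₗ[C] V)
    (hg_symm : ∀ X Y, g X Y = g Y X)
    (hJJ : ∀ X, J (J X) = -X)
    (hJg : ∀ X Y, g (J X) (J Y) = g X Y)
    (hJpar : ∀ X Y, nab X (J Y) = J (nab X Y))
    -- ∇ is torsion-free
    (htors : ∀ X Y, lie X Y = nab X Y - nab Y X)
    (D : Submodule C V)
    (hJD : ∀ X ∈ D, J X ∈ D)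
    (hrank2 : ∀ X ∈ D, ∀ Y ∈ D, g X X • Y = g X Y • X + g (J X) Y • J X)
    (xi : V)
    (hxi : ∀ W ∈ D, g xi W = 0)
    (humb : ∀ X ∈ D, (2 : C) • nab X X - g X X • xi ∈ D) :
    ∀ X ∈ D,
      ((2 : C) • nab (J X) X + g X X • J xi ∈ D) ∧
      (lie X (J X) - g X X • J xi ∈ D) := by
  intro X hX
  have hJX : J X ∈ D := hJD X hX
  -- umbilicity at JX, rewritten using J-parallelity
  have h1 : (2 : C) • J (nab (J X) X) - g X X • xi ∈ D := by
    have h := humb (J X) hJX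
    rwa [hJpar, hJg] at h
  -- apply J
  have h1J : J ((2 : C) • J (nab (J X) X) - g X X • xi) ∈ D := hJD _ h1
  have hpart1 : (2 : C) • nab (J X) X + g X X • J xi ∈ D := by
    rw [map_sub, map_smul, map_smul, hJJ] at h1J
    have := D.neg_mem h1J
    simpa [smul_neg, sub_eq_add_neg, neg_add, neg_neg, add_comm] using this
  refine ⟨hpart1, ?_⟩
  -- umbilicity at X, apply J
  have h2 : J ((2 : C) • nab X X - g X X • xi) ∈ D := hJD _ (humb X hX)
  rw [map_sub, map_smul, map_smul] at h2
  -- subtract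
  have h3 : ((2 : C) • J (nab X X) - g X X • J xi)
      - ((2 : C) • nab (J X) X + g X X • J xi) ∈ D := D.sub_mem h2 hpart1
  have h4 : (2 : C) • (lie X (J X) - g X X • J xi) ∈ D := by
    have : ((2 : C) • J (nab X X) - g X X • J xi)
        - ((2 : C) • nab (J X) X + g X X • J xi)
        = (2 : C) • (lie X (J X) - g X X • J xi) := by
      rw [htors, hJpar]
      module
    rwa [this] at h3
  have hc : (algebraMap ℝ C (2⁻¹)) * 2 = 1 := by
    rw [← map_ofNat (algebraMap ℝ C) 2, ← map_mul]
    norm_num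
  have := D.smul_mem (algebraMap ℝ C (2⁻¹)) h4
  rwa [smul_smul, hc, one_smul] at this
end

section
/- Let x₀ be a point of a Kähler manifold with special Kähler potential τ such that τ(x₀) = c, dτ(x₀) = 0, and the derivative dQ/dτ at the critical value equals ±2a ≠ 0, where Q = |∇τ|² is a smooth function of τ. Then the function (τ-c)/Q extends smoothly to a neighborhood of x₀ with value ±1/(2a) at x₀; hence the tensor g(SJX,Y) = (τ-c)ω - ((τ-c)/Q) dτ ∧ d^cτ extends smoothly across x₀ with S_{x₀} = 0. -/
open Set

open scoped ContDiff in
private lemma param_int_contDiff_aux (n : ℕ) : ∀ G : ℝ × ℝ → ℝ, ContDiff ℝ ∞ G →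
    ContDiff ℝ n (fun t => ∫ s in (0:ℝ)..1, G (t, s)) := by
  induction n with
  | zero =>
    intro G hG
    rw [Nat.cast_zero, contDiff_zero]
    exact intervalIntegral.continuous_parametric_intervalIntegral_of_continuous'
      (f := fun t s => G (t, s)) hG.continuous 0 1
  | succ n ih =>
    intro G hG
    set G₁ : ℝ × ℝ → ℝ := fun p => fderiv ℝ G p ((1:ℝ), (0:ℝ)) with hG₁def
    have hG₁ : ContDiff ℝ ∞ G₁ :=
      (hG.fderiv_right (m := ∞) (by simp)).clm_apply contDiff_const
    have hdiff : ∀ x s : ℝ, HasDerivAt (fun x => G (x, s)) (G₁ (x, s)) x := by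
      intro x s
      have h1 : HasDerivAt (fun x : ℝ => (x, s)) ((1:ℝ), (0:ℝ)) x :=
        (hasDerivAt_id x).prodMk (hasDerivAt_const x s)
      exact ((hG.differentiable (by simp)) (x, s)).hasFDerivAt.comp_hasDerivAt x h1
    have hderiv : ∀ t, HasDerivAt (fun t => ∫ s in (0:ℝ)..1, G (t, s))
        (∫ s in (0:ℝ)..1, G₁ (t, s)) t := by
      intro t
      obtain ⟨C, hC⟩ : ∃ C, ∀ p ∈ Metric.closedBall t 1 ×ˢ Set.uIcc (0:ℝ) 1, ‖G₁ p‖ ≤ C :=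
        ((isCompact_closedBall t 1).prod isCompact_uIcc).exists_bound_of_continuousOn
          hG₁.continuous.continuousOn
      refine (intervalIntegral.hasDerivAt_integral_of_dominated_loc_of_deriv_le
        (F := fun x s => G (x, s)) (F' := fun x s => G₁ (x, s)) (bound := fun _ => C)
        (Metric.ball_mem_nhds t one_pos) ?_ ?_ ?_ ?_ ?_ ?_).2
      · exact Filter.Eventually.of_forall fun x =>
          (hG.continuous.comp (continuous_const.prodMk continuous_id)).aestronglyMeasurable
      · exact (hG.continuous.comp (continuous_const.prodMk continuous_id)).intervalIntegrable _ _
      · exact (hG₁.continuous.comp (continuous_const.prodMk continuous_id)).aestronglyMeasurable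
      · refine Filter.Eventually.of_forall fun s hs x hx => hC (x, s) ⟨?_, ?_⟩
        · exact Metric.ball_subset_closedBall hx
        · exact Set.uIoc_subset_uIcc hs
      · exact intervalIntegrable_const
      · exact Filter.Eventually.of_forall fun s _ x _ => hdiff x s
    have hd : deriv (fun t => ∫ s in (0:ℝ)..1, G (t, s)) = fun t => ∫ s in (0:ℝ)..1, G₁ (t, s) :=
      funext fun t => (hderiv t).deriv
    rw [Nat.cast_succ, contDiff_succ_iff_deriv]
    refine ⟨fun t => (hderiv t).differentiableAt, by simp, ?_⟩
    rw [hd]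
    exact ih G₁ hG₁

open scoped ContDiff in
private lemma dslope_contDiff_aux (F : ℝ → ℝ) (hF : ContDiff ℝ (⊤ : ℕ∞) F) (c : ℝ) :
    ContDiff ℝ (⊤ : ℕ∞) (dslope F c) := by
  have hF' : ContDiff ℝ ∞ (deriv F) := (contDiff_infty_iff_deriv.mp hF).2
  have hG : ContDiff ℝ ∞ (fun p : ℝ × ℝ => deriv F (c + p.2 * (p.1 - c))) :=
    hF'.comp (contDiff_const.add (contDiff_snd.mul (contDiff_fst.sub contDiff_const)))
  have hI : ContDiff ℝ ∞ (fun t => ∫ s in (0:ℝ)..1, deriv F (c + s * (t - c))) :=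
    contDiff_infty.mpr fun n => param_int_contDiff_aux n _ hG
  have hFd : ∀ x, HasDerivAt F (deriv F x) x :=
    fun x => ((hF.differentiable (by simp)) x).hasDerivAt
  have key : ∀ t, (t - c) * ∫ s in (0:ℝ)..1, deriv F (c + s * (t - c)) = F t - F c := by
    intro t
    rw [← intervalIntegral.integral_const_mul]
    have h : ∀ s ∈ Set.uIcc (0:ℝ) 1, HasDerivAt (fun s => F (c + s * (t - c)))
        ((t - c) * deriv F (c + s * (t - c))) s := by
      intro s _
      have h2 : HasDerivAt (fun s : ℝ => c + s * (t - c)) (t - c) s := by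
        simpa using ((hasDerivAt_id s).mul_const (t - c)).const_add c
      have := (hFd (c + s * (t - c))).comp s h2
      rw [mul_comm]
      exact this
    rw [intervalIntegral.integral_eq_sub_of_hasDerivAt h]
    · simp
    · exact ((hF'.continuous.comp (continuous_const.add
        (continuous_id.mul continuous_const))).const_mul _ |>.intervalIntegrable _ _)
  convert hI using 1
  funext t
  rcases eq_or_ne t c with rfl | ht
  · simp [dslope_same]
  · rw [dslope_of_ne F ht, slope_def_field, ← key t]
    have : t - c ≠ 0 := sub_ne_zero.mpr ht
    field_simp

private lemma hadamard_aux (F : ℝ → ℝ) (hF : ContDiff ℝ (⊤ : ℕ∞) F) (c : ℝ) (hFc : F c = 0) :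
    ∃ g : ℝ → ℝ, ContDiff ℝ (⊤ : ℕ∞) g ∧ g c = deriv F c ∧ ∀ t, F t = (t - c) * g t := by
  refine ⟨dslope F c, ?_, dslope_same F c, ?_⟩
  · exact dslope_contDiff_aux F hF c
  · intro t
    have := sub_smul_dslope F c t
    rw [hFc, sub_zero] at this
    simpa [smul_eq_mul] using this.symm

/- STATEMENT 19 (Section 3, smooth extension of S across the isolated critical
point x₀).  We work in a chart: M is modelled on the normed space `E`, τ is the
special Kähler potential, Q = |∇τ|² = F∘τ with F smooth, F(c) = 0 and
F'(c) = ±2a ≠ 0 at the endpoint value c = τ(x₀); x₀ is a critical point of τ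
(dτ(x₀) = 0).  `Jm x` is the complex structure and `om x` the Kähler form ω at
x (both smooth), and d^cτ = dτ∘J.  Conclusion: (τ-c)/Q extends to a smooth
function h on a neighborhood U of x₀ with h(x₀) = 1/(±2a); hence the tensor
g(SJ·,·) = (τ-c)ω - ((τ-c)/Q) dτ ∧ d^cτ extends smoothly across x₀, with
S_{x₀} = 0. -/
theorem special_kahler_potential_tensor_extends
    {E : Type*} [NormedAddCommGroup E] [NormedSpace ℝ E]
    (tau : E → ℝ) (htau : ContDiff ℝ (⊤ : ℕ∞) tau)
    (F : ℝ → ℝ) (hF : ContDiff ℝ (⊤ : ℕ∞) F)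
    (Q : E → ℝ) (hQF : ∀ x, Q x = F (tau x))
    (c a e : ℝ) (ha : a ≠ 0)
    -- the derivative dQ/dτ at the critical value equals ±2a
    (he : e = 2 * a ∨ e = -(2 * a))
    (hFc : F c = 0) (hF'c : deriv F c = e)
    (x₀ : E) (hx₀ : tau x₀ = c) (hdx₀ : fderiv ℝ tau x₀ = 0)
    (Jm : E → E →L[ℝ] E) (hJm : ContDiff ℝ (⊤ : ℕ∞) Jm)
    (om : E → E →L[ℝ] E →L[ℝ] ℝ) (hom : ContDiff ℝ (⊤ : ℕ∞) om) :
    ∃ U : Set E, IsOpen U ∧ x₀ ∈ U ∧ ∃ h : E → ℝ,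
      -- (τ-c)/Q extends smoothly to U with value 1/(±2a) at x₀ ...
      ContDiffOn ℝ (⊤ : ℕ∞) h U ∧ h x₀ = 1 / e ∧
      (∀ x ∈ U, Q x ≠ 0 → h x = (tau x - c) / Q x) ∧
      -- ... hence (τ-c)ω - ((τ-c)/Q) dτ ∧ d^cτ is smooth on U ...
      (∀ Y Z : E, ContDiffOn ℝ (⊤ : ℕ∞)
        (fun x => (tau x - c) * om x Y Z
          - h x * (fderiv ℝ tau x Y * fderiv ℝ tau x (Jm x Z)
                 - fderiv ℝ tau x Z * fderiv ℝ tau x (Jm x Y))) U) ∧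
      -- ... and S_{x₀} = 0
      (∀ Y Z : E, (tau x₀ - c) * om x₀ Y Z
          - h x₀ * (fderiv ℝ tau x₀ Y * fderiv ℝ tau x₀ (Jm x₀ Z)
                 - fderiv ℝ tau x₀ Z * fderiv ℝ tau x₀ (Jm x₀ Y)) = 0) := by
  have he0 : e ≠ 0 := by rcases he with rfl | rfl <;> simp [ha]
  obtain ⟨g, hg, hgc, hFt⟩ := hadamard_aux F hF c hFc
  have hgc' : g c = e := by rw [hgc, hF'c]
  have hgtau : ContDiff ℝ (⊤ : ℕ∞) fun x => g (tau x) := hg.comp htau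
  refine ⟨(fun x => g (tau x)) ⁻¹' {0}ᶜ,
    isOpen_compl_singleton.preimage hgtau.continuous, ?_,
    fun x => (g (tau x))⁻¹, ?_, ?_, ?_, ?_, ?_⟩
  · simp [hx₀, hgc', he0]
  · exact hgtau.contDiffOn.inv fun x hx => by simpa using hx
  · show (g (tau x₀))⁻¹ = 1 / e
    rw [hx₀, hgc', one_div]
  · intro x hx hQ
    have hg0 : g (tau x) ≠ 0 := by simpa using hx
    rw [hQF, hFt (tau x)] at hQ ⊢
    have htc : tau x - c ≠ 0 := fun h => hQ (by rw [h, zero_mul])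
    field_simp
  · intro Y Z
    have hd : ContDiff ℝ (⊤ : ℕ∞) (fderiv ℝ tau) := htau.fderiv_right (by simp)
    have h1 : ContDiff ℝ (⊤ : ℕ∞) fun x => fderiv ℝ tau x Y := hd.clm_apply contDiff_const
    have h2 : ContDiff ℝ (⊤ : ℕ∞) fun x => fderiv ℝ tau x Z := hd.clm_apply contDiff_const
    have h3 : ContDiff ℝ (⊤ : ℕ∞) fun x => fderiv ℝ tau x (Jm x Z) :=
      hd.clm_apply (hJm.clm_apply contDiff_const)
    have h4 : ContDiff ℝ (⊤ : ℕ∞) fun x => fderiv ℝ tau x (Jm x Y) :=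
      hd.clm_apply (hJm.clm_apply contDiff_const)
    have h5 : ContDiff ℝ (⊤ : ℕ∞) fun x => om x Y Z :=
      (hom.clm_apply contDiff_const).clm_apply contDiff_const
    have h6 : ContDiffOn ℝ (⊤ : ℕ∞) (fun x : E => (g (tau x))⁻¹) ((fun x => g (tau x)) ⁻¹' {0}ᶜ) :=
      hgtau.contDiffOn.inv fun x hx => by simpa using hx
    exact (((htau.sub contDiff_const).mul h5).contDiffOn).sub
      (h6.mul ((h1.mul h3).sub (h2.mul h4)).contDiffOn)
  · intro Y Z
    simp [hx₀, hdx₀]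
end
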